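/- arXiv:hep-th/0604120 — 3 statements merged into one kernel-verified Lean document; each statement's English description precedes it below -/
import Mathlib

section
/- (Choi–Kraus operator-sum representation.) For every completely positive linear map Φ : M_n(ℂ) → M_m(ℂ) between complex matrix algebras there exists a finite family of m×n complex matrices {E_a}, which may be chosen with at most n·m members, such that Φ(ρ) = Σ_a E_a ρ E_a† for all ρ ∈ M_n(ℂ). -/
/-!
Apply `id_n ⊗ Φ` to the positive rank-one matrix `ω ω†`, where `ω = Σ_i e_i ⊗ e_i` is the
vectorised identity: the result is the Choi matrix `C = [Φ(E_ij)]_ij`, which is therefore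
positive semidefinite and factors as `C = B† B` with `B` square of size `nm`. Reshaping each of
the `nm` rows of `B` into an `m × n` matrix gives Kraus operators: expanding `ρ = Σ ρ_ij E_ij`,
the entries of `Φ(ρ)` and of `Σ_z E_z ρ E_z†` are the same bilinear expression in `ρ` and `B† B`.
-/

open Matrix
open scoped ComplexOrder

/-- The tensor extension `id_k ⊗ Φ` of a linear map between matrix algebras, acting on
`kn × kn` matrices via the Kronecker-product identification
`M_k(ℂ) ⊗ M_n(ℂ) ≅ M_{kn}(ℂ)`. -/
def tensorExt {n m : ℕ} (Φ : Matrix (Fin n) (Fin n) ℂ →ₗ[ℂ] Matrix (Fin m) (Fin m) ℂ)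
    (k : ℕ) (M : Matrix (Fin k × Fin n) (Fin k × Fin n) ℂ) :
    Matrix (Fin k × Fin m) (Fin k × Fin m) ℂ :=
  Matrix.of fun p q => Φ (Matrix.of fun a b => M (p.1, a) (q.1, b)) p.2 q.2

/-- A linear map `Φ : M_n(ℂ) → M_m(ℂ)` is completely positive if for every `k ≥ 1` the
map `id_k ⊗ Φ` maps positive semidefinite matrices to positive semidefinite matrices. -/
def IsCompletelyPositive {n m : ℕ}
    (Φ : Matrix (Fin n) (Fin n) ℂ →ₗ[ℂ] Matrix (Fin m) (Fin m) ℂ) : Prop :=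
  ∀ (k : ℕ) (M : Matrix (Fin k × Fin n) (Fin k × Fin n) ℂ),
    M.PosSemidef → (tensorExt Φ k M).PosSemidef

section Choi

variable {ι κ ζ R : Type*} [CommSemiring R]

def choiMatrix [DecidableEq ι] (Φ : Matrix ι ι R →ₗ[R] Matrix κ κ R) :
    Matrix (ι × κ) (ι × κ) R :=
  of fun p q => Φ (single p.1 q.1 1) p.2 q.2

theorem apply_eq_sum_choiMatrix [Fintype ι] [DecidableEq ι]
    (Φ : Matrix ι ι R →ₗ[R] Matrix κ κ R) (ρ : Matrix ι ι R) (p q : κ) :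
    Φ ρ p q = ∑ i, ∑ j, ρ i j * choiMatrix Φ (i, p) (j, q) := by
  conv_lhs => rw [matrix_eq_sum_single ρ]
  simp only [map_sum, Matrix.sum_apply]
  refine Fintype.sum_congr _ _ fun i => Fintype.sum_congr _ _ fun j => ?_
  have : single i j (ρ i j) = ρ i j • single i j 1 := by simp
  rw [this, map_smul, Matrix.smul_apply, smul_eq_mul, choiMatrix, of_apply]

variable [StarRing R]

def krausOperator (B : Matrix ζ (ι × κ) R) (z : ζ) : Matrix κ ι R :=
  of fun p i => star (B z (i, p))

theorem sum_krausOperator_mul_mul_conjTranspose_apply [Fintype ι] [Fintype ζ]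
    (B : Matrix ζ (ι × κ) R) (ρ : Matrix ι ι R) (p q : κ) :
    (∑ z, krausOperator B z * ρ * (krausOperator B z)ᴴ) p q =
      ∑ i, ∑ j, ρ i j * (Bᴴ * B) (i, p) (j, q) := by
  simp only [Matrix.sum_apply, mul_apply, krausOperator, conjTranspose_apply, of_apply, star_star,
    Finset.sum_mul, Finset.mul_sum]
  rw [Finset.sum_comm]
  refine (Fintype.sum_congr _ _ fun j => Finset.sum_comm).trans ?_
  rw [Finset.sum_comm]
  exact Fintype.sum_congr _ _ fun i => Fintype.sum_congr _ _ fun j =>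
    Fintype.sum_congr _ _ fun z => by ring

theorem eq_sum_krausOperator_of_choiMatrix_eq [Fintype ι] [DecidableEq ι] [Fintype ζ]
    {Φ : Matrix ι ι R →ₗ[R] Matrix κ κ R} {B : Matrix ζ (ι × κ) R} (hB : choiMatrix Φ = Bᴴ * B)
    (ρ : Matrix ι ι R) :
    Φ ρ = ∑ z, krausOperator B z * ρ * (krausOperator B z)ᴴ := by
  ext p q
  rw [apply_eq_sum_choiMatrix, hB, sum_krausOperator_mul_mul_conjTranspose_apply]

end Choi

theorem Matrix.PosSemidef.exists_eq_conjTranspose_mul_self {ι 𝕜 : Type*} [Fintype ι]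
    [DecidableEq ι] [RCLike 𝕜] {A : Matrix ι ι 𝕜} (hA : A.PosSemidef) :
    ∃ B : Matrix ι ι 𝕜, A = Bᴴ * B := by
  open scoped MatrixOrder in
  exact CStarAlgebra.nonneg_iff_eq_star_mul_self.mp hA.nonneg

theorem tensorExt_vecMulVec_vec_one {n m : ℕ}
    (Φ : Matrix (Fin n) (Fin n) ℂ →ₗ[ℂ] Matrix (Fin m) (Fin m) ℂ) :
    tensorExt Φ n (vecMulVec (star (vec 1)) (vec 1)) = choiMatrix Φ := by
  ext ⟨i, p⟩ ⟨j, q⟩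
  have : (of fun a b => vecMulVec (star (vec 1)) (vec 1) (i, a) (j, b)) = single i j (1 : ℂ) := by
    ext a b
    simp only [of_apply, vecMulVec_apply, vec, Pi.star_apply, one_apply, single_apply]
    split_ifs <;> simp_all
  simp only [tensorExt, choiMatrix, of_apply, this]

theorem IsCompletelyPositive.posSemidef_choiMatrix {n m : ℕ}
    {Φ : Matrix (Fin n) (Fin n) ℂ →ₗ[ℂ] Matrix (Fin m) (Fin m) ℂ}
    (hΦ : IsCompletelyPositive Φ) :
    (choiMatrix Φ).PosSemidef :=
  tensorExt_vecMulVec_vec_one Φ ▸ hΦ n _ (posSemidef_vecMulVec_star_self _)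

/-- **Choi–Kraus operator-sum representation.**  Every completely positive linear map
`Φ : M_n(ℂ) → M_m(ℂ)` admits a family of `m × n` matrices `{E_a}` with at most `n·m`
members such that `Φ(ρ) = Σ_a E_a ρ E_a†` for all `ρ`. -/
theorem choi_kraus_opsum {n m : ℕ}
    (Φ : Matrix (Fin n) (Fin n) ℂ →ₗ[ℂ] Matrix (Fin m) (Fin m) ℂ)
    (hΦ : IsCompletelyPositive Φ) :
    ∃ (N : ℕ) (E : Fin N → Matrix (Fin m) (Fin n) ℂ),
      N ≤ n * m ∧ ∀ ρ : Matrix (Fin n) (Fin n) ℂ, Φ ρ = ∑ a, E a * ρ * (E a)ᴴ := by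
  obtain ⟨B, hB⟩ := hΦ.posSemidef_choiMatrix.exists_eq_conjTranspose_mul_self
  refine ⟨n * m, fun a => krausOperator B (finProdFinEquiv.symm a), le_rfl, fun ρ => ?_⟩
  rw [eq_sum_krausOperator_of_choiMatrix_eq hB]
  exact (finProdFinEquiv.symm.sum_comp _).symm
end

section
/- (Non-uniqueness of operator-sum representations.) If {E_a}_{a=1}^N and {F_b}_{b=1}^M are two finite families of m×n complex matrices that implement the same map, i.e. Σ_a E_a ρ E_a† = Σ_b F_b ρ F_b† for all ρ ∈ M_n(ℂ), then there is a scalar matrix U = (u_{ab}) of complex numbers such that E_a = Σ_b u_{ab} F_b for all a. -/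
/-!
A linear functional `φ` on `m × n` matrices satisfies
`Σ_a φ(E_a) φ(E_a)* = Σ_{i,j,k,l} φ(e_ij) φ(e_kl)* (Σ_a E_a e_jl E_a†)_ik`,
so this quantity only depends on the map `ρ ↦ Σ_a E_a ρ E_a†`. If `φ` vanishes on every `F_b`,
the same quantity for the family `F` is zero, hence `φ(E_a) = 0` for all `a`. A vector killed by
every functional vanishing on a subspace lies in it, so each `E_a` is in the span of the `F_b`.
-/

open Matrix

section
variable {R : Type*} [CommRing R] {ι l m n : Type*} [Fintype ι] [Fintype m] [Fintype n]
  [DecidableEq m] [DecidableEq n]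

theorem Matrix.linearMap_apply_eq_sum_single (φ : Matrix m n R →ₗ[R] R) (X : Matrix m n R) :
    φ X = ∑ i, ∑ j, X i j * φ (single i j 1) := by
  conv_lhs => rw [matrix_eq_sum_single X]
  refine (map_sum _ _ _).trans (Finset.sum_congr rfl fun i _ => (map_sum _ _ _).trans ?_)
  refine Finset.sum_congr rfl fun j _ => ?_
  rw [← smul_eq_mul, ← map_smul, smul_single, smul_eq_mul, mul_one]

variable [StarRing R]

theorem Matrix.sum_mul_single_mul_conjTranspose_apply (E : ι → Matrix l n R) (i k : l)
    (j j' : n) :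
    (∑ a, E a * single j j' (1 : R) * (E a)ᴴ) i k = ∑ a, E a i j * star (E a k j') := by
  simp [Matrix.sum_apply, mul_apply, single, ite_and]

theorem Matrix.sum_linearMap_mul_star_eq (φ : Matrix m n R →ₗ[R] R) (E : ι → Matrix m n R) :
    ∑ a, φ (E a) * star (φ (E a)) =
      ∑ i, ∑ j, ∑ k, ∑ l, φ (single i j 1) * star (φ (single k l 1)) *
        (∑ a, E a * single j l (1 : R) * (E a)ᴴ) i k := by
  simp only [sum_mul_single_mul_conjTranspose_apply, linearMap_apply_eq_sum_single φ (E _),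
    star_sum, star_mul', Finset.sum_mul]
  simp only [Finset.mul_sum]
  rw [Finset.sum_comm]; refine Finset.sum_congr rfl fun i _ => ?_
  rw [Finset.sum_comm]; refine Finset.sum_congr rfl fun j _ => ?_
  rw [Finset.sum_comm]; refine Finset.sum_congr rfl fun k _ => ?_
  rw [Finset.sum_comm]; refine Finset.sum_congr rfl fun l _ => ?_
  refine Finset.sum_congr rfl fun a _ => ?_
  ring

end

theorem RCLike.sum_mul_star_eq_zero_iff {𝕜 ι : Type*} [RCLike 𝕜] [Fintype ι] (z : ι → 𝕜) :
    ∑ a, z a * star (z a) = 0 ↔ ∀ a, z a = 0 := by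
  simp_rw [RCLike.star_def, RCLike.mul_conj]
  norm_cast
  simp [Finset.sum_eq_zero_iff_of_nonneg (fun a _ => sq_nonneg ‖z a‖)]

theorem Submodule.mem_of_forall_le_ker {K V : Type*} [Field K] [AddCommGroup V] [Module K V]
    {p : Submodule K V} {v : V} (h : ∀ f : V →ₗ[K] K, p ≤ LinearMap.ker f → f v = 0) :
    v ∈ p := by
  by_contra hv
  obtain ⟨f, hfv, hpf⟩ := exists_le_ker_of_notMem hv
  exact hfv (h f hpf)

theorem Matrix.mem_span_range_of_sum_mul_mul_conjTranspose_eq {𝕜 ι κ m n : Type*} [RCLike 𝕜]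
    [Fintype ι] [Fintype κ] [Fintype m] [Fintype n]
    {E : ι → Matrix m n 𝕜} {F : κ → Matrix m n 𝕜}
    (h : ∀ ρ : Matrix n n 𝕜, ∑ a, E a * ρ * (E a)ᴴ = ∑ b, F b * ρ * (F b)ᴴ) (a : ι) :
    E a ∈ Submodule.span 𝕜 (Set.range F) := by
  classical
  refine Submodule.mem_of_forall_le_ker fun φ hφ => ?_
  have hF : ∀ b, φ (F b) = 0 := fun b => hφ (Submodule.subset_span ⟨b, rfl⟩)
  have hE : ∑ a, φ (E a) * star (φ (E a)) = 0 := by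
    rw [sum_linearMap_mul_star_eq]
    simp only [h]
    rw [← sum_linearMap_mul_star_eq]
    simp [hF]
  exact (RCLike.sum_mul_star_eq_zero_iff _).1 hE a

/-- **Non-uniqueness of operator-sum representations.**  If two finite families `{E_a}`
and `{F_b}` of `m × n` matrices implement the same map, i.e.
`Σ_a E_a ρ E_a† = Σ_b F_b ρ F_b†` for all `ρ`, then there is a scalar matrix
`U = (u_{ab})` with `E_a = Σ_b u_{ab} F_b` for all `a`. -/
theorem opsum_nonunique {n m N M : ℕ}
    (E : Fin N → Matrix (Fin m) (Fin n) ℂ) (F : Fin M → Matrix (Fin m) (Fin n) ℂ)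
    (h : ∀ ρ : Matrix (Fin n) (Fin n) ℂ,
      ∑ a, E a * ρ * (E a)ᴴ = ∑ b, F b * ρ * (F b)ᴴ) :
    ∃ u : Fin N → Fin M → ℂ, ∀ a, E a = ∑ b, u a b • F b := by
  choose u hu using fun a => (Submodule.mem_span_range_iff_exists_fun ℂ).1
    (mem_span_range_of_sum_mul_mul_conjTranspose_eq h a)
  exact ⟨u, fun a => (hu a).symm⟩
end

section
/- (Fixed points of a unital trace-preserving channel are the commutant of the evolution algebra.) Let Φ : M_n(ℂ) → M_n(ℂ) be given by Φ(ρ) = Σ_a E_a ρ E_a† for a finite family of n×n complex matrices {E_a} satisfying both Σ_a E_a† E_a = 1_n (trace preservation) and Σ_a E_a E_a† = 1_n (unitality). Then for every ρ ∈ M_n(ℂ), Φ(ρ) = ρ if and only if ρ commutes with E_a and with E_a† for every index a (i.e. ρ lies in the commutant of the †-closed algebra generated by the operators E_a). -/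
open Matrix

private lemma tr4 {n : ℕ} (A B C D : Matrix (Fin n) (Fin n) ℂ) :
    trace (A * B * (C * D)) = trace (B * C * (D * A)) := by
  rw [show A * B * (C * D) = A * (B * C * D) by noncomm_ring, trace_mul_comm,
    show B * C * D * A = B * C * (D * A) by noncomm_ring]

private lemma sum_tr_zero {n N : ℕ} (X : Fin N → Matrix (Fin n) (Fin n) ℂ)
    (h : ∑ a, trace (X a * (X a)ᴴ) = 0) (a : Fin N) : X a = 0 := by
  have key : ∀ b, trace (X b * (X b)ᴴ)
      = ((∑ i, ∑ j, Complex.normSq (X b i j) : ℝ) : ℂ) := by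
    intro b
    simp [Matrix.trace, Matrix.diag, Matrix.mul_apply, Matrix.conjTranspose_apply,
      Complex.mul_conj]
  rw [Finset.sum_congr rfl fun b _ => key b] at h
  have h' : ∑ b, ∑ i, ∑ j, Complex.normSq (X b i j) = 0 := by exact_mod_cast h
  have hz : ∀ b ∈ Finset.univ, ∀ i ∈ Finset.univ, ∀ j ∈ (Finset.univ : Finset (Fin n)),
      Complex.normSq (X b i j) = 0 := by
    have h1 := (Finset.sum_eq_zero_iff_of_nonneg (fun b _ =>
      Finset.sum_nonneg fun i _ => Finset.sum_nonneg fun j _ => Complex.normSq_nonneg _)).mp h'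
    intro b hb i hi j hj
    have h2 := (Finset.sum_eq_zero_iff_of_nonneg (fun i _ =>
      Finset.sum_nonneg fun j _ => Complex.normSq_nonneg _)).mp (h1 b hb) i hi
    exact (Finset.sum_eq_zero_iff_of_nonneg (fun j _ => Complex.normSq_nonneg _)).mp h2 j hj
  ext i j
  simpa using Complex.normSq_eq_zero.mp (hz a (Finset.mem_univ _) i (Finset.mem_univ _) j (Finset.mem_univ _))

private lemma fixed_comm {n N : ℕ} (E : Fin N → Matrix (Fin n) (Fin n) ℂ)
    (htp : ∑ a, (E a)ᴴ * E a = (1 : Matrix (Fin n) (Fin n) ℂ))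
    (hu : ∑ a, E a * (E a)ᴴ = (1 : Matrix (Fin n) (Fin n) ℂ))
    (ρ : Matrix (Fin n) (Fin n) ℂ)
    (h : ∑ a, E a * ρ * (E a)ᴴ = ρ)
    (hconj : ∑ a, E a * ρᴴ * (E a)ᴴ = ρᴴ) :
    ∀ a, ρ * E a = E a * ρ := by
  set X : Fin N → Matrix (Fin n) (Fin n) ℂ := fun a => ρ * E a - E a * ρ with hX
  have key : ∑ a, trace (X a * (X a)ᴴ) = 0 := by
    have expand : ∀ a, X a * (X a)ᴴ
        = ρ * E a * ((E a)ᴴ * ρᴴ) - ρ * E a * (ρᴴ * (E a)ᴴ)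
          - (E a * ρ * ((E a)ᴴ * ρᴴ) - E a * ρ * (ρᴴ * (E a)ᴴ)) := by
      intro a
      simp [hX, conjTranspose_sub, conjTranspose_mul, Matrix.mul_sub, Matrix.sub_mul]
      abel
    have e1 : ∑ a, trace (ρ * E a * ((E a)ᴴ * ρᴴ)) = trace (ρᴴ * ρ) := by
      calc ∑ a, trace (ρ * E a * ((E a)ᴴ * ρᴴ))
          = ∑ a, trace (E a * (E a)ᴴ * (ρᴴ * ρ)) :=
            Finset.sum_congr rfl fun a _ => tr4 ρ (E a) (E a)ᴴ ρᴴ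
        _ = trace ((∑ a, E a * (E a)ᴴ) * (ρᴴ * ρ)) := by
            rw [Finset.sum_mul, trace_sum]
        _ = trace (ρᴴ * ρ) := by rw [hu, one_mul]
    have e2 : ∑ a, trace (ρ * E a * (ρᴴ * (E a)ᴴ)) = trace (ρᴴ * ρ) := by
      calc ∑ a, trace (ρ * E a * (ρᴴ * (E a)ᴴ))
          = ∑ a, trace (E a * ρᴴ * ((E a)ᴴ * ρ)) :=
            Finset.sum_congr rfl fun a _ => tr4 ρ (E a) ρᴴ (E a)ᴴ
        _ = ∑ a, trace (E a * ρᴴ * (E a)ᴴ * ρ) := by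
            refine Finset.sum_congr rfl fun a _ => ?_
            rw [Matrix.mul_assoc (E a * ρᴴ)]
        _ = trace ((∑ a, E a * ρᴴ * (E a)ᴴ) * ρ) := by rw [Finset.sum_mul, trace_sum]
        _ = trace (ρᴴ * ρ) := by rw [hconj]
    have e3 : ∑ a, trace (E a * ρ * ((E a)ᴴ * ρᴴ)) = trace (ρ * ρᴴ) := by
      calc ∑ a, trace (E a * ρ * ((E a)ᴴ * ρᴴ))
          = ∑ a, trace (E a * ρ * (E a)ᴴ * ρᴴ) := by
            refine Finset.sum_congr rfl fun a _ => ?_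
            rw [Matrix.mul_assoc (E a * ρ)]
        _ = trace ((∑ a, E a * ρ * (E a)ᴴ) * ρᴴ) := by rw [Finset.sum_mul, trace_sum]
        _ = trace (ρ * ρᴴ) := by rw [h]
    have e4 : ∑ a, trace (E a * ρ * (ρᴴ * (E a)ᴴ)) = trace (ρ * ρᴴ) := by
      calc ∑ a, trace (E a * ρ * (ρᴴ * (E a)ᴴ))
          = ∑ a, trace (ρ * ρᴴ * ((E a)ᴴ * E a)) :=
            Finset.sum_congr rfl fun a _ => tr4 (E a) ρ ρᴴ (E a)ᴴ
        _ = trace (ρ * ρᴴ * (∑ a, (E a)ᴴ * E a)) := by rw [Finset.mul_sum, trace_sum]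
        _ = trace (ρ * ρᴴ) := by rw [htp, mul_one]
    calc ∑ a, trace (X a * (X a)ᴴ)
        = ∑ a, (trace (ρ * E a * ((E a)ᴴ * ρᴴ)) - trace (ρ * E a * (ρᴴ * (E a)ᴴ))
            - (trace (E a * ρ * ((E a)ᴴ * ρᴴ)) - trace (E a * ρ * (ρᴴ * (E a)ᴴ)))) := by
          refine Finset.sum_congr rfl fun a _ => ?_
          rw [expand a]
          simp [trace_sub]
      _ = 0 := by
          simp only [Finset.sum_sub_distrib]
          rw [e1, e2, e3, e4]; ring
  intro a
  have h0 : ρ * E a - E a * ρ = 0 := sum_tr_zero X key a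
  exact sub_eq_zero.mp h0


/-- **Fixed points of a unital trace-preserving channel are the commutant of the
evolution algebra.**  If `Φ(ρ) = Σ_a E_a ρ E_a†` with `Σ_a E_a† E_a = 1` (trace
preservation) and `Σ_a E_a E_a† = 1` (unitality), then `Φ(ρ) = ρ` iff `ρ` commutes
with every `E_a` and every `E_a†`. -/
theorem opsum_fixed_points_iff_commutant {n N : ℕ}
    (E : Fin N → Matrix (Fin n) (Fin n) ℂ)
    (htp : ∑ a, (E a)ᴴ * E a = (1 : Matrix (Fin n) (Fin n) ℂ))
    (hu : ∑ a, E a * (E a)ᴴ = (1 : Matrix (Fin n) (Fin n) ℂ))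
    (ρ : Matrix (Fin n) (Fin n) ℂ) :
    (∑ a, E a * ρ * (E a)ᴴ = ρ) ↔
      ∀ a, ρ * E a = E a * ρ ∧ ρ * (E a)ᴴ = (E a)ᴴ * ρ := by
  constructor
  · intro h
    have hconj : ∑ a, E a * ρᴴ * (E a)ᴴ = ρᴴ := by
      have := congrArg conjTranspose h
      rw [conjTranspose_sum] at this
      simpa [conjTranspose_mul, Matrix.mul_assoc] using this
    intro a
    refine ⟨fixed_comm E htp hu ρ h hconj a, ?_⟩
    have h2 := fixed_comm E htp hu ρᴴ hconj (by simpa using h) a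
    have := congrArg conjTranspose h2
    simpa [conjTranspose_mul] using this.symm
  · intro h
    calc ∑ a, E a * ρ * (E a)ᴴ = ∑ a, E a * (E a)ᴴ * ρ := by
          refine Finset.sum_congr rfl fun a _ => ?_
          rw [Matrix.mul_assoc, (h a).2, ← Matrix.mul_assoc]
      _ = ρ := by rw [← Finset.sum_mul, hu, one_mul]
end
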